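/- There exist two zigzag persistence modules M and N over F indexed by {1,2,3,4,5} with the same rank invariant (ranks of all structure maps between comparable indices agree) which are not isomorphic: M = I_{[2,3]} ⊕ I_{[3,4]} and N = I_{[2,4]} ⊕ I_{[3,3]}. -/

import Mathlib

open CategoryTheory Limits

variable (K : Type) [Field K] {P : Type} [PartialOrder P]

/-- Zigzag-connectedness of a subset of a poset. -/
def ConnectedIn (I : Set P) : Prop :=
  ∀ p ∈ I, ∀ q ∈ I, Relation.ReflTransGen (fun a b => a ∈ I ∧ b ∈ I ∧ (a ≤ b ∨ b ≤ a)) p q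

/-- Convexity of a subset of a poset. -/
def ConvexIn (I : Set P) : Prop :=
  ∀ ⦃p q r : P⦄, p ∈ I → r ∈ I → p ≤ q → q ≤ r → q ∈ I

/-- An interval of a poset: nonempty, convex and connected. -/
def IsIntervalSet (I : Set P) : Prop :=
  I.Nonempty ∧ ConvexIn I ∧ ConnectedIn I

/-- Restriction of a persistence module to a subset of the indexing poset. -/
def restrict (M : P ⥤ ModuleCat.{0} K) (I : Set P) : I ⥤ ModuleCat.{0} K :=
  (Monotone.functor (f := (Subtype.val : I → P)) (fun _ _ h => h)) ⋙ M

/-- The canonical limit-to-colimit map `i_p ∘ π_p` of the restriction of `M` to `I`. -/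
noncomputable def canMap (M : P ⥤ ModuleCat.{0} K) (I : Set P) (p : P) (hp : p ∈ I) :
    limit (restrict K M I) ⟶ colimit (restrict K M I) :=
  limit.π (restrict K M I) ⟨p, hp⟩ ≫ colimit.ι (restrict K M I) ⟨p, hp⟩

open Classical in
/-- The generalized rank of `M` over `I` (for `I` an interval, independent of basepoint). -/
noncomputable def genRank (M : P ⥤ ModuleCat.{0} K) (I : Set P) : Cardinal :=
  if h : I.Nonempty then LinearMap.rank (canMap K M I h.choose h.choose_spec).hom else 0


/-- A lower fence of (the subposet) `I`. -/
def IsLowerFenceOf (I L : Set P) : Prop :=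
  L ⊆ I ∧ ConnectedIn L ∧ ∀ q ∈ I, (L ∩ {r | r ≤ q}).Nonempty ∧ ConnectedIn (L ∩ {r | r ≤ q})

/-- An upper fence of (the subposet) `I`. -/
def IsUpperFenceOf (I U : Set P) : Prop :=
  U ⊆ I ∧ ConnectedIn U ∧ ∀ q ∈ I, (U ∩ {r | q ≤ r}).Nonempty ∧ ConnectedIn (U ∩ {r | q ≤ r})

/-- The space of sections of a persistence module: compatible tuples. -/
def sectionsSubmodule (M : P ⥤ ModuleCat.{0} K) : Submodule K (∀ p, M.obj p) where
  carrier := {v | ∀ (p q : P) (h : p ≤ q), M.map h.hom (v p) = v q}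
  add_mem' := by intro a b ha hb p q h; simp [map_add, ha p q h, hb p q h]
  zero_mem' := by intro p q h; simp
  smul_mem' := by intro c a ha p q h; simp [map_smul, ha p q h]

open Classical in
/-- `⊤` if `b` holds, `⊥` otherwise; underlying space of an interval module at a point. -/
noncomputable def condSub (b : Prop) : Submodule K K := if b then ⊤ else ⊥

open Classical in
/-- The structure map of an interval module. -/
noncomputable def condMap (b c : Prop) : condSub K b →ₗ[K] condSub K c where
  toFun x := ⟨if b ∧ c then (x : K) else 0, by
    by_cases hc : c
    · simp [condSub, hc]
    · rw [if_neg (fun h => hc h.2)]; exact Submodule.zero_mem _⟩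
  map_add' x y := by ext; split_ifs <;> simp
  map_smul' r x := by ext; split_ifs <;> simp

lemma condMap_id (b : Prop) : condMap K b b = LinearMap.id := by
  classical
  ext x
  by_cases hb : b
  · simp [condMap, hb]
  · have hx : (x : K) = 0 := by
      have h2 := x.2; simp only [condSub, if_neg hb] at h2; exact (Submodule.mem_bot K).mp h2
    simp [condMap, hb, hx]

lemma condMap_comp (b c d : Prop) (h : b → d → c) :
    (condMap K c d).comp (condMap K b c) = condMap K b d := by
  classical
  ext x
  by_cases hb : b <;> by_cases hc : c <;> by_cases hd : d <;>
    simp [condMap, hb, hc, hd]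
  exact absurd (h hb hd) hc

/-- The interval module supported on a convex set `S`. -/
noncomputable def IM (S : Set P) (hS : ConvexIn S) : P ⥤ ModuleCat.{0} K where
  obj p := ModuleCat.of K (condSub K (p ∈ S))
  map {p q} h := ModuleCat.ofHom (condMap K (p ∈ S) (q ∈ S))
  map_id p := by
    rw [condMap_id]
    rfl
  map_comp {p q r} h h' := by
    rw [← condMap_comp K (p ∈ S) (q ∈ S) (r ∈ S) (fun hp hr => hS hp hr h.le h'.le)]
    rfl

/-- On a copy of the zigzag poset `1 ← 2 → 3 ← 4 → 5` (here indexed by `Fin 5` via `x`,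
with `0 ← 1 → 2 ← 3 → 4`), there exist two persistence modules with the same rank
invariant which are not isomorphic. -/
def SameRankInvariantNotIso (K : Type) [Field K] (P : Type) [PartialOrder P]
    (x : Fin 5 → P) : Prop :=
  Function.Bijective x ∧
  (∀ i j : Fin 5, x i ≤ x j ↔
    i = j ∨ (i, j) ∈ ({(1, 0), (1, 2), (3, 2), (3, 4)} : Set (Fin 5 × Fin 5))) ∧
  ∃ M N : P ⥤ ModuleCat.{0} K,
    (∀ (p q : P) (h : p ≤ q), LinearMap.rank (M.map h.hom).hom = LinearMap.rank (N.map h.hom).hom) ∧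
    IsEmpty (M ≅ N)

section ZigzagCounterexample

/-- The five-element zigzag index set. -/
inductive ZZ : Type
  | z0 | z1 | z2 | z3 | z4
deriving DecidableEq

instance : Fintype ZZ where
  elems := {.z0, .z1, .z2, .z3, .z4}
  complete x := by cases x <;> decide

/-- The order relation of the zigzag `0 ← 1 → 2 ← 3 → 4`, as a Boolean predicate. -/
def ZZ.leB : ZZ → ZZ → Bool
  | a, b => a == b || (a == .z1 && (b == .z0 || b == .z2)) || (a == .z3 && (b == .z2 || b == .z4))

lemma ZZ.leB_trans : ∀ {a b c : ZZ}, leB a b = true → leB b c = true → leB a c = true := by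
  decide

lemma ZZ.leB_antisymm : ∀ {a b : ZZ}, leB a b = true → leB b a = true → a = b := by
  decide

instance : PartialOrder ZZ where
  le a b := ZZ.leB a b = true
  le_refl a := by cases a <;> rfl
  le_trans _ _ _ h h' := ZZ.leB_trans h h'
  le_antisymm _ _ h h' := ZZ.leB_antisymm h h'

instance : DecidableRel ((· ≤ ·) : ZZ → ZZ → Prop) := fun a b =>
  inferInstanceAs (Decidable (ZZ.leB a b = true))

variable (K : Type) [Field K]

/-- The common object function of the two modules. -/
def Vobj : ZZ → ModuleCat.{0} K
  | .z2 => ModuleCat.of K (K × K)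
  | _ => ModuleCat.of K K

/-- Structure maps of `M`. -/
def fM : ∀ a b : ZZ, (Vobj K a ⟶ Vobj K b)
  | .z1, .z2 => ModuleCat.ofHom (LinearMap.inl K K K)
  | .z3, .z2 => ModuleCat.ofHom (LinearMap.inr K K K)
  | .z0, .z0 => 𝟙 _
  | .z1, .z1 => 𝟙 _
  | .z2, .z2 => 𝟙 _
  | .z3, .z3 => 𝟙 _
  | .z4, .z4 => 𝟙 _
  | _, _ => 0

/-- The diagonal map `x ↦ (x, x)`. -/
def diagMap : K →ₗ[K] K × K := LinearMap.prod LinearMap.id LinearMap.id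

/-- Structure maps of `N`. -/
def fN : ∀ a b : ZZ, (Vobj K a ⟶ Vobj K b)
  | .z1, .z2 => ModuleCat.ofHom (diagMap K)
  | .z3, .z2 => ModuleCat.ofHom (diagMap K)
  | .z0, .z0 => 𝟙 _
  | .z1, .z1 => 𝟙 _
  | .z2, .z2 => 𝟙 _
  | .z3, .z3 => 𝟙 _
  | .z4, .z4 => 𝟙 _
  | _, _ => 0

/-- The module `M ≅ I_{[2,3]} ⊕ I_{[3,4]}` (up to adding trivial one-dimensional pieces
at the endpoints, which does not affect ranks nor isomorphy). -/
def Mfun : ZZ ⥤ ModuleCat.{0} K where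
  obj := Vobj K
  map {a b} _ := fM K a b
  map_id a := by cases a <;> rfl
  map_comp {a b c} h h' := by
    have hab : a ≤ b := leOfHom h
    have hbc : b ≤ c := leOfHom h'
    cases a <;> cases b <;> cases c <;>
      first
        | exact absurd hab (by decide)
        | exact absurd hbc (by decide)
        | exact (Category.id_comp _).symm

/-- The module `N ≅ I_{[2,4]} ⊕ I_{[3,3]}` (up to trivial endpoint pieces). -/
def Nfun : ZZ ⥤ ModuleCat.{0} K where
  obj := Vobj K
  map {a b} _ := fN K a b
  map_id a := by cases a <;> rfl
  map_comp {a b c} h h' := by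
    have hab : a ≤ b := leOfHom h
    have hbc : b ≤ c := leOfHom h'
    cases a <;> cases b <;> cases c <;>
      first
        | exact absurd hab (by decide)
        | exact absurd hbc (by decide)
        | exact (Category.id_comp _).symm

lemma rank_of_injective {V W : Type} [AddCommGroup V] [Module K V]
    [AddCommGroup W] [Module K W] (f : V →ₗ[K] W) (hf : Function.Injective f) :
    LinearMap.rank f = Module.rank K V :=
  ((LinearEquiv.ofInjective f hf).rank_eq).symm

lemma rank_inl : LinearMap.rank (LinearMap.inl K K K) = 1 := by
  rw [rank_of_injective K _ LinearMap.inl_injective, Module.rank_self]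

lemma rank_inr : LinearMap.rank (LinearMap.inr K K K) = 1 := by
  rw [rank_of_injective K _ LinearMap.inr_injective, Module.rank_self]

lemma rank_diag : LinearMap.rank (diagMap K) = 1 := by
  have hinj : Function.Injective (diagMap K) := fun x y h => by
    simpa [diagMap, Prod.ext_iff] using congrArg Prod.fst h
  rw [rank_of_injective K _ hinj, Module.rank_self]

end ZigzagCounterexample


/-- There exist two zigzag modules over `{1,…,5}` with the same rank invariant which
are not isomorphic (e.g. `I_{[2,3]} ⊕ I_{[3,4]}` and `I_{[2,4]} ⊕ I_{[3,3]}`). -/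
theorem exists_same_rank_invariant_not_iso (K : Type) [Field K] :
    ∃ (P : Type) (inst : PartialOrder P) (x : Fin 5 → P),
      @SameRankInvariantNotIso K _ P inst x := by
  classical
  refine ⟨ZZ, inferInstance, ![ZZ.z0, ZZ.z1, ZZ.z2, ZZ.z3, ZZ.z4], ?_, ?_, Mfun K, Nfun K, ?_, ?_⟩
  · decide
  · intro i j
    simp only [Set.mem_insert_iff, Set.mem_singleton_iff, Prod.mk.injEq]
    fin_cases i <;> fin_cases j <;> simp <;> decide
  · intro p q h
    cases p <;> cases q <;>
      first
        | exact absurd h (by decide)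
        | rfl
        | exact (rank_inl K).trans (rank_diag K).symm
        | exact (rank_inr K).trans (rank_diag K).symm
  · constructor
    intro e
    have hnat1 := e.hom.naturality (homOfLE (show ZZ.z1 ≤ ZZ.z2 by decide))
    have hnat3 := e.hom.naturality (homOfLE (show ZZ.z3 ≤ ZZ.z2 by decide))
    have h1 : ∀ x : K, (e.hom.app ZZ.z2) ((x, 0) : K × K)
        = ((e.hom.app ZZ.z1) x, (e.hom.app ZZ.z1) x) := by
      intro x
      have := ConcreteCategory.congr_hom hnat1 x
      exact this
    have h3 : ∀ x : K, (e.hom.app ZZ.z2) ((0, x) : K × K)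
        = ((e.hom.app ZZ.z3) x, (e.hom.app ZZ.z3) x) := by
      intro x
      have := ConcreteCategory.congr_hom hnat3 x
      exact this
    have hdiag : ∀ v : K × K, ((e.hom.app ZZ.z2) v).1 = ((e.hom.app ZZ.z2) v).2 := by
      intro v
      have hv : v = ((v.1, 0) : K × K) + (0, v.2) := by simp
      rw [hv]
      erw [map_add, h1, h3]
      rfl
    have hsur : Function.Surjective (e.hom.app ZZ.z2) := by
      intro y
      refine ⟨(e.inv.app ZZ.z2) y, ?_⟩
      simpa using ConcreteCategory.congr_hom (e.inv_hom_id_app ZZ.z2) y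
    obtain ⟨v, hv⟩ := hsur ((1, 0) : K × K)
    have := hdiag v
    rw [hv] at this
    exact one_ne_zero this
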